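/- Let S′ be a subprogram obtained from a HeyVL program S by erasing only extensive statements (replacing them with skip). Then vp[S′](X) ≤ vp[S](X) pointwise for all expectations X. Consequently, S′ is a verification-witnessing slice: if X ≤ vp[S′](Y) pointwise, then X ≤ vp[S](Y) pointwise. -/

import Mathlib

open scoped ENNReal

/-- HeyVL statements over variables `Var` and values `Val`.
Program states are functions `Var → Val`, expectations are `(Var → Val) → ℝ≥0∞`. -/
inductive Stmt (Var Val : Type) where
  /-- effectless statement (used for erased statements) -/
  | skip
  /-- probabilistic assignment `x ≈ μ` for a finite-support distribution
  `μ = p₁·t₁ + … + pₙ·tₙ` given as a list of pairs of probabilities and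
  value expressions -/
  | passign (x : Var) (μ : List (ℝ≥0∞ × ((Var → Val) → Val)))
  | assert (Y : (Var → Val) → ℝ≥0∞)
  | assume_ (Y : (Var → Val) → ℝ≥0∞)
  | coassert (Y : (Var → Val) → ℝ≥0∞)
  | coassume (Y : (Var → Val) → ℝ≥0∞)
  | havoc (x : Var)
  | cohavoc (x : Var)
  | validate
  | covalidate
  | reward (a : (Var → Val) → ℝ≥0∞)
  | seq (S₁ S₂ : Stmt Var Val)
  | demonic (S₁ S₂ : Stmt Var Val)
  | angelic (S₁ S₂ : Stmt Var Val)

variable {Var Val : Type} [DecidableEq Var]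

/-- The verification pre-expectation transformer `vp[S]`. -/
noncomputable def vp : Stmt Var Val → ((Var → Val) → ℝ≥0∞) → ((Var → Val) → ℝ≥0∞)
  | .skip, X => X
  | .passign x μ, X =>
      fun σ => (μ.map (fun pt => pt.1 * X (Function.update σ x (pt.2 σ)))).sum
  | .assert Y, X => fun σ => Y σ ⊓ X σ
  | .assume_ Y, X => fun σ => if Y σ ≤ X σ then ⊤ else X σ
  | .coassert Y, X => fun σ => Y σ ⊔ X σ
  | .coassume Y, X => fun σ => if X σ ≤ Y σ then 0 else X σ
  | .havoc x, X => fun σ => ⨅ v : Val, X (Function.update σ x v)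
  | .cohavoc x, X => fun σ => ⨆ v : Val, X (Function.update σ x v)
  | .validate, X => fun σ => if X σ = ⊤ then ⊤ else 0
  | .covalidate, X => fun σ => if X σ = 0 then 0 else ⊤
  | .reward a, X => fun σ => X σ + a σ
  | .seq S₁ S₂, X => vp S₁ (vp S₂ X)
  | .demonic S₁ S₂, X => fun σ => vp S₁ X σ ⊓ vp S₂ X σ
  | .angelic S₁ S₂, X => fun σ => vp S₁ X σ ⊔ vp S₂ X σ

/-- A statement is extensive if `vp[S](X) ≥ X` pointwise for all expectations `X`. -/
def Extensive (S : Stmt Var Val) : Prop :=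
  ∀ (X : (Var → Val) → ℝ≥0∞) (σ : Var → Val), X σ ≤ vp S X σ

/-- `ErasesExtensive S S′` holds iff `S′` is a subprogram obtained from `S` by
erasing only extensive statements (replacing them with `skip`), lifted
compositionally through sequencing and both choice constructs. -/
inductive ErasesExtensive : Stmt Var Val → Stmt Var Val → Prop
  | refl (S : Stmt Var Val) : ErasesExtensive S S
  | erase (S : Stmt Var Val) (h : Extensive S) : ErasesExtensive S .skip
  | seq {S₁ S₂ S₁' S₂' : Stmt Var Val} :
      ErasesExtensive S₁ S₁' → ErasesExtensive S₂ S₂' →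
      ErasesExtensive (.seq S₁ S₂) (.seq S₁' S₂')
  | demonic {S₁ S₂ S₁' S₂' : Stmt Var Val} :
      ErasesExtensive S₁ S₁' → ErasesExtensive S₂ S₂' →
      ErasesExtensive (.demonic S₁ S₂) (.demonic S₁' S₂')
  | angelic {S₁ S₂ S₁' S₂' : Stmt Var Val} :
      ErasesExtensive S₁ S₁' → ErasesExtensive S₂ S₂' →
      ErasesExtensive (.angelic S₁ S₂) (.angelic S₁' S₂')

/-! Induction on the erasure derivation: an erased statement `S` satisfies
`vp[skip] = id ≤ vp[S]` by extensivity, and the bound propagates through both choices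
pointwise and through `S₁; S₂` because `vp[S₁]` is monotone. -/

section PointwiseMonotone

variable {α : Type*} [PartialOrder α]

theorem monotone_ite_le_top [OrderTop α] [DecidableLE α] (y : α) :
    Monotone fun x : α => if y ≤ x then ⊤ else x := by
  intro x x' hx
  dsimp only
  split_ifs with h h' h'
  exacts [le_rfl, absurd (h.trans hx) h', le_top, hx]

theorem monotone_ite_le_bot [OrderBot α] [DecidableLE α] (y : α) :
    Monotone fun x : α => if x ≤ y then ⊥ else x := by
  intro x x' hx
  dsimp only
  split_ifs with h h' h'
  exacts [le_rfl, bot_le, absurd (hx.trans h') h, hx]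

theorem monotone_ite_eq_top [BoundedOrder α] [DecidableEq α] :
    Monotone fun x : α => if x = ⊤ then ⊤ else (⊥ : α) := by
  intro x x' hx
  dsimp only
  split_ifs with h h' h'
  exacts [le_rfl, absurd (top_le_iff.mp (h ▸ hx)) h', le_top, le_rfl]

theorem monotone_ite_eq_bot [BoundedOrder α] [DecidableEq α] :
    Monotone fun x : α => if x = ⊥ then ⊥ else (⊤ : α) := by
  intro x x' hx
  dsimp only
  split_ifs with h h' h'
  exacts [le_rfl, bot_le, absurd (le_bot_iff.mp (h' ▸ hx)) h, le_rfl]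

end PointwiseMonotone

theorem vp_monotone (S : Stmt Var Val) : Monotone (vp S) := by
  induction S with
  | skip => exact monotone_id
  | passign =>
      exact fun X X' hX σ =>
        List.sum_le_sum fun _ _ => mul_le_mul_right (hX _) _
  | assert Y => exact fun X X' hX σ => inf_le_inf_left _ (hX σ)
  | assume_ Y => exact fun X X' hX σ => monotone_ite_le_top (Y σ) (hX σ)
  | coassert Y => exact fun X X' hX σ => sup_le_sup_left (hX σ) _
  | coassume Y => exact fun X X' hX σ => monotone_ite_le_bot (Y σ) (hX σ)
  | havoc => exact fun X X' hX σ => iInf_mono fun _ => hX _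
  | cohavoc => exact fun X X' hX σ => iSup_mono fun _ => hX _
  | validate => exact fun X X' hX σ => monotone_ite_eq_top (hX σ)
  | covalidate => exact fun X X' hX σ => monotone_ite_eq_bot (hX σ)
  | reward => exact fun X X' hX σ => add_le_add_left (hX σ) _
  | seq _ _ ih₁ ih₂ => exact ih₁.comp ih₂
  | demonic _ _ ih₁ ih₂ => exact fun X X' hX σ => inf_le_inf (ih₁ hX σ) (ih₂ hX σ)
  | angelic _ _ ih₁ ih₂ => exact fun X X' hX σ => sup_le_sup (ih₁ hX σ) (ih₂ hX σ)

theorem ErasesExtensive.vp_le {S S' : Stmt Var Val} (h : ErasesExtensive S S') :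
    vp S' ≤ vp S := by
  induction h with
  | refl => exact le_rfl
  | erase _ hS => exact hS
  | seq _ _ ih₁ ih₂ => exact fun X => ((vp_monotone _) (ih₂ X)).trans (ih₁ _)
  | demonic _ _ ih₁ ih₂ => exact fun X σ => inf_le_inf (ih₁ X σ) (ih₂ X σ)
  | angelic _ _ ih₁ ih₂ => exact fun X σ => sup_le_sup (ih₁ X σ) (ih₂ X σ)

/-- Erasing extensive statements yields `vp[S′](X) ≤ vp[S](X)` pointwise; hence `S′` is
a verification-witnessing slice of `S`: if `X ≤ vp[S′](Y)` pointwise, then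
`X ≤ vp[S](Y)` pointwise. -/
theorem erase_extensive_verificationWitnessing (S S' : Stmt Var Val)
    (h : ErasesExtensive S S') :
    (∀ (X : (Var → Val) → ℝ≥0∞) (σ : Var → Val), vp S' X σ ≤ vp S X σ) ∧
    (∀ (X Y : (Var → Val) → ℝ≥0∞),
      (∀ σ, X σ ≤ vp S' Y σ) → (∀ σ, X σ ≤ vp S Y σ)) :=
  ⟨h.vp_le, fun _ Y hXY σ => (hXY σ).trans (h.vp_le Y σ)⟩
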